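/- arXiv:2212.09716 — 2 statements merged into one kernel-verified Lean document; each statement's English description precedes it below -/
import Mathlib

section
/- Assume k'(t)τ(t) − k(t)τ'(t) ≠ 0 for all t and let ε = ξ + (k/(k'τ − kτ'))·(τ·t + k·b) be the pseudo-evolute of ξ. Then ε'(t) = (k³·(τ/k)''/(k'τ − kτ')²)·(τ(t)·t(t) + k(t)·b(t)). In particular ε'(t) = 0 (a cusp of the pseudo-evolute) if and only if (τ/k)''(t) = 0. -/
open scoped RealInnerProductSpace

noncomputable section

/-- The determinant of the 3×3 matrix with rows `u`, `v`, `w`. -/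
def det3 (u v w : EuclideanSpace ℝ (Fin 3)) : ℝ :=
  u 0 * (v 1 * w 2 - v 2 * w 1) - u 1 * (v 0 * w 2 - v 2 * w 0)
    + u 2 * (v 0 * w 1 - v 1 * w 0)

/-- The cross product of two vectors in `ℝ³`. -/
def cross3 (u v : EuclideanSpace ℝ (Fin 3)) : EuclideanSpace ℝ (Fin 3) :=
  (WithLp.equiv 2 (Fin 3 → ℝ)).symm
    ![u 1 * v 2 - u 2 * v 1, u 2 * v 0 - u 0 * v 2, u 0 * v 1 - u 1 * v 0]

lemma cross3_apply (u v : EuclideanSpace ℝ (Fin 3)) (i : Fin 3) :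
    cross3 u v i = ![u 1 * v 2 - u 2 * v 1, u 2 * v 0 - u 0 * v 2, u 0 * v 1 - u 1 * v 0] i :=
  rfl

lemma inner3 (x y : EuclideanSpace ℝ (Fin 3)) :
    ⟪x, y⟫ = x 0 * y 0 + x 1 * y 1 + x 2 * y 2 := by
  simp [PiLp.inner_apply, RCLike.inner_apply, Fin.sum_univ_three]
  ring

lemma cross3_self (x : EuclideanSpace ℝ (Fin 3)) : cross3 x x = 0 := by
  ext i
  fin_cases i <;> simp [cross3_apply] <;> ring

lemma cross3_smul_right (c : ℝ) (x y : EuclideanSpace ℝ (Fin 3)) :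
    cross3 x (c • y) = c • cross3 x y := by
  ext i
  fin_cases i <;> simp [cross3_apply] <;> ring

lemma inner_cross3_left (x y : EuclideanSpace ℝ (Fin 3)) : ⟪cross3 x y, x⟫ = 0 := by
  simp [PiLp.inner_apply, RCLike.inner_apply, Fin.sum_univ_three, cross3_apply]
  ring

lemma cross_key (a b c : EuclideanSpace ℝ (Fin 3)) (h1 : ⟪a, a⟫ = 1) (h2 : ⟪a, b⟫ = 0) :
    ⟪b, b⟫ • cross3 a c = ⟪b, c⟫ • cross3 a b - det3 a b c • b := by
  rw [inner3] at h1 h2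
  rw [inner3 b b, inner3 b c]
  ext i
  fin_cases i <;>
    simp [cross3_apply, det3, inner3, Fin.sum_univ_three]
  · linear_combination ((-((a 0)*((b 1)*(c 2) - (b 2)*(c 1)) - (a 1)*((b 0)*(c 2) - (b 2)*(c 0)) + (a 2)*((b 0)*(c 1) - (b 1)*(c 0)))*(b 0) + ((b 0)*(c 0) + (b 1)*(c 1) + (b 2)*(c 2))*((a 1)*(b 2) - (a 2)*(b 1)) - ((b 0)*(b 0) + (b 1)*(b 1) + (b 2)*(b 2))*((a 1)*(c 2) - (a 2)*(c 1)))) * h1 + ((((a 0)*((b 1)*(c 2) - (b 2)*(c 1)) - (a 1)*((b 0)*(c 2) - (b 2)*(c 0)) + (a 2)*((b 0)*(c 1) - (b 1)*(c 0)))*(a 0) - ((a 0)*(c 0) + (a 1)*(c 1) + (a 2)*(c 2))*((a 1)*(b 2) - (a 2)*(b 1)) + ((a 0)*(b 0) + (a 1)*(b 1) + (a 2)*(b 2))*((a 1)*(c 2) - (a 2)*(c 1)))) * h2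
  · linear_combination ((-((a 0)*((b 1)*(c 2) - (b 2)*(c 1)) - (a 1)*((b 0)*(c 2) - (b 2)*(c 0)) + (a 2)*((b 0)*(c 1) - (b 1)*(c 0)))*(b 1) + ((b 0)*(c 0) + (b 1)*(c 1) + (b 2)*(c 2))*((a 2)*(b 0) - (a 0)*(b 2)) - ((b 0)*(b 0) + (b 1)*(b 1) + (b 2)*(b 2))*((a 2)*(c 0) - (a 0)*(c 2)))) * h1 + ((((a 0)*((b 1)*(c 2) - (b 2)*(c 1)) - (a 1)*((b 0)*(c 2) - (b 2)*(c 0)) + (a 2)*((b 0)*(c 1) - (b 1)*(c 0)))*(a 1) - ((a 0)*(c 0) + (a 1)*(c 1) + (a 2)*(c 2))*((a 2)*(b 0) - (a 0)*(b 2)) + ((a 0)*(b 0) + (a 1)*(b 1) + (a 2)*(b 2))*((a 2)*(c 0) - (a 0)*(c 2)))) * h2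
  · linear_combination ((-((a 0)*((b 1)*(c 2) - (b 2)*(c 1)) - (a 1)*((b 0)*(c 2) - (b 2)*(c 0)) + (a 2)*((b 0)*(c 1) - (b 1)*(c 0)))*(b 2) + ((b 0)*(c 0) + (b 1)*(c 1) + (b 2)*(c 2))*((a 0)*(b 1) - (a 1)*(b 0)) - ((b 0)*(b 0) + (b 1)*(b 1) + (b 2)*(b 2))*((a 0)*(c 1) - (a 1)*(c 0)))) * h1 + ((((a 0)*((b 1)*(c 2) - (b 2)*(c 1)) - (a 1)*((b 0)*(c 2) - (b 2)*(c 0)) + (a 2)*((b 0)*(c 1) - (b 1)*(c 0)))*(a 2) - ((a 0)*(c 0) + (a 1)*(c 1) + (a 2)*(c 2))*((a 0)*(b 1) - (a 1)*(b 0)) + ((a 0)*(b 0) + (a 1)*(b 1) + (a 2)*(b 2))*((a 0)*(c 1) - (a 1)*(c 0)))) * h2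

lemma hasDerivAt_proj {a : ℝ → EuclideanSpace ℝ (Fin 3)} {a' : EuclideanSpace ℝ (Fin 3)}
    {t : ℝ} (ha : HasDerivAt a a' t) (i : Fin 3) :
    HasDerivAt (fun s => a s i) (a' i) t :=
  (EuclideanSpace.proj (𝕜 := ℝ) i).hasFDerivAt.comp_hasDerivAt t ha

lemma hasDerivAt_cross3 {a b : ℝ → EuclideanSpace ℝ (Fin 3)} {a' b' : EuclideanSpace ℝ (Fin 3)}
    {t : ℝ} (ha : HasDerivAt a a' t) (hb : HasDerivAt b b' t) :
    HasDerivAt (fun s => cross3 (a s) (b s)) (cross3 a' (b t) + cross3 (a t) b') t := by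
  have key : (fun s => cross3 (a s) (b s)) = fun s =>
      (a s 1 * b s 2 - a s 2 * b s 1) • (EuclideanSpace.single (0 : Fin 3) (1:ℝ)) +
      (a s 2 * b s 0 - a s 0 * b s 2) • (EuclideanSpace.single (1 : Fin 3) (1:ℝ)) +
      (a s 0 * b s 1 - a s 1 * b s 0) • (EuclideanSpace.single (2 : Fin 3) (1:ℝ)) := by
    funext s
    ext i
    fin_cases i <;> simp [cross3_apply, EuclideanSpace.single_apply]
  rw [key]
  have h0 : HasDerivAt (fun s => a s 1 * b s 2 - a s 2 * b s 1)
      ((a' 1 * b t 2 + a t 1 * b' 2) - (a' 2 * b t 1 + a t 2 * b' 1)) t :=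
    (((hasDerivAt_proj ha 1).mul (hasDerivAt_proj hb 2)).sub
      ((hasDerivAt_proj ha 2).mul (hasDerivAt_proj hb 1)))
  have h1 : HasDerivAt (fun s => a s 2 * b s 0 - a s 0 * b s 2)
      ((a' 2 * b t 0 + a t 2 * b' 0) - (a' 0 * b t 2 + a t 0 * b' 2)) t :=
    (((hasDerivAt_proj ha 2).mul (hasDerivAt_proj hb 0)).sub
      ((hasDerivAt_proj ha 0).mul (hasDerivAt_proj hb 2)))
  have h2 : HasDerivAt (fun s => a s 0 * b s 1 - a s 1 * b s 0)
      ((a' 0 * b t 1 + a t 0 * b' 1) - (a' 1 * b t 0 + a t 1 * b' 0)) t :=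
    (((hasDerivAt_proj ha 0).mul (hasDerivAt_proj hb 1)).sub
      ((hasDerivAt_proj ha 1).mul (hasDerivAt_proj hb 0)))
  have := ((h0.smul_const (EuclideanSpace.single (0 : Fin 3) (1:ℝ))).add
      (h1.smul_const (EuclideanSpace.single (1 : Fin 3) (1:ℝ)))).add
      (h2.smul_const (EuclideanSpace.single (2 : Fin 3) (1:ℝ)))
  refine this.congr_deriv ?_
  refine PiLp.ext fun i => ?_
  fin_cases i <;> simp [cross3_apply, EuclideanSpace.single_apply] <;> ring

theorem stmt_12
    (ξ : ℝ → EuclideanSpace ℝ (Fin 3))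
    (hξ : ContDiff ℝ (⊤ : ℕ∞) ξ)
    (hunit : ∀ t, ‖deriv ξ t‖ = 1)
    (k τ r : ℝ → ℝ) (N B : ℝ → EuclideanSpace ℝ (Fin 3))
    (hk : ∀ t, k t = ‖deriv (deriv ξ) t‖)
    (hkpos : ∀ t, 0 < k t)
    (hN : ∀ t, N t = (k t)⁻¹ • deriv (deriv ξ) t)
    (hB : ∀ t, B t = cross3 (deriv ξ t) (N t))
    (hτ : ∀ t, τ t = det3 (deriv ξ t) (deriv (deriv ξ) t) (deriv (deriv (deriv ξ)) t) / (k t) ^ 2)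
    (hτne : ∀ t, τ t ≠ 0)
    (hr : ∀ t, r t = (k t)⁻¹)
    (hW : ∀ t, deriv k t * τ t - k t * deriv τ t ≠ 0)
    (pe : ℝ → EuclideanSpace ℝ (Fin 3))
    (hpe : ∀ t, pe t = ξ t + (k t / (deriv k t * τ t - k t * deriv τ t)) •
        (τ t • deriv ξ t + k t • B t)) :
    ∀ t, deriv pe t =
        (k t ^ 3 * deriv (deriv (fun s => τ s / k s)) t /
          (deriv k t * τ t - k t * deriv τ t) ^ 2) • (τ t • deriv ξ t + k t • B t) ∧
      (deriv pe t = 0 ↔ deriv (deriv (fun s => τ s / k s)) t = 0) := by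
  have hkne : ∀ s, k s ≠ 0 := fun s => ne_of_gt (hkpos s)
  have hs0 : ContDiff ℝ (⊤:ℕ∞) ξ := hξ.of_le (by simp)
  have hs1 : ContDiff ℝ (⊤:ℕ∞) (deriv ξ) := (contDiff_infty_iff_deriv.mp hs0).2
  have hs2 : ContDiff ℝ (⊤:ℕ∞) (deriv (deriv ξ)) := (contDiff_infty_iff_deriv.mp hs1).2
  have hs3 : ContDiff ℝ (⊤:ℕ∞) (deriv (deriv (deriv ξ))) := (contDiff_infty_iff_deriv.mp hs2).2
  have hD0 : ∀ s, HasDerivAt ξ (deriv ξ s) s := fun s =>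
    (hs0.differentiable (by simp) s).hasDerivAt
  have hD1 : ∀ s, HasDerivAt (deriv ξ) (deriv (deriv ξ) s) s := fun s =>
    (hs1.differentiable (by simp) s).hasDerivAt
  have hD2 : ∀ s, HasDerivAt (deriv (deriv ξ)) (deriv (deriv (deriv ξ)) s) s := fun s =>
    (hs2.differentiable (by simp) s).hasDerivAt
  have hvne : ∀ s, deriv (deriv ξ) s ≠ 0 := by
    intro s h
    have := hkpos s
    rw [hk s, h, norm_zero] at this
    exact lt_irrefl 0 this
  have huu : ∀ s, ⟪deriv ξ s, deriv ξ s⟫ = 1 := fun s => by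
    rw [real_inner_self_eq_norm_sq, hunit s]; norm_num
  have huv : ∀ s, ⟪deriv ξ s, deriv (deriv ξ) s⟫ = 0 := by
    intro s
    have h1 : HasDerivAt (fun r => ⟪deriv ξ r, deriv ξ r⟫)
        (⟪deriv ξ s, deriv (deriv ξ) s⟫ + ⟪deriv (deriv ξ) s, deriv ξ s⟫) s :=
      (hD1 s).inner ℝ (hD1 s)
    have h2 : HasDerivAt (fun r => ⟪deriv ξ r, deriv ξ r⟫) 0 s := by
      have e : (fun r => ⟪deriv ξ r, deriv ξ r⟫) = fun _ => (1:ℝ) := funext fun r => huu r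
      rw [e]; exact hasDerivAt_const s 1
    have h3 := h1.unique h2
    linarith [h3, real_inner_comm (deriv ξ s) (deriv (deriv ξ) s)]
  have hkfun : k = fun s => ‖deriv (deriv ξ) s‖ := funext hk
  have hkC : ContDiff ℝ (⊤:ℕ∞) k := by rw [hkfun]; exact hs2.norm ℝ hvne
  have hk'C : ContDiff ℝ (⊤:ℕ∞) (deriv k) := (contDiff_infty_iff_deriv.mp hkC).2
  have hproj : ∀ (f : ℝ → EuclideanSpace ℝ (Fin 3)), ContDiff ℝ (⊤:ℕ∞) f →
      ∀ i : Fin 3, ContDiff ℝ (⊤:ℕ∞) (fun s => f s i) := fun f hf i => contDiff_euclidean.mp hf i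
  have hdetC : ContDiff ℝ (⊤:ℕ∞)
      (fun s => det3 (deriv ξ s) (deriv (deriv ξ) s) (deriv (deriv (deriv ξ)) s)) := by
    simp only [det3]
    exact (((hproj _ hs1 0).mul (((hproj _ hs2 1).mul (hproj _ hs3 2)).sub
      ((hproj _ hs2 2).mul (hproj _ hs3 1)))).sub
      ((hproj _ hs1 1).mul (((hproj _ hs2 0).mul (hproj _ hs3 2)).sub
      ((hproj _ hs2 2).mul (hproj _ hs3 0))))).add
      ((hproj _ hs1 2).mul (((hproj _ hs2 0).mul (hproj _ hs3 1)).sub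
      ((hproj _ hs2 1).mul (hproj _ hs3 0))))
  have hτfun : τ = fun s =>
      det3 (deriv ξ s) (deriv (deriv ξ) s) (deriv (deriv (deriv ξ)) s) / k s ^ 2 := funext hτ
  have hτC : ContDiff ℝ (⊤:ℕ∞) τ := by
    rw [hτfun]; exact hdetC.div (hkC.pow 2) fun s => pow_ne_zero 2 (hkne s)
  have hτ'C : ContDiff ℝ (⊤:ℕ∞) (deriv τ) := (contDiff_infty_iff_deriv.mp hτC).2
  have hDk : ∀ s, HasDerivAt k (deriv k s) s := fun s =>
    (hkC.differentiable (by simp) s).hasDerivAt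
  have hDk' : ∀ s, HasDerivAt (deriv k) (deriv (deriv k) s) s := fun s =>
    (hk'C.differentiable (by simp) s).hasDerivAt
  have hDτ : ∀ s, HasDerivAt τ (deriv τ s) s := fun s =>
    (hτC.differentiable (by simp) s).hasDerivAt
  have hDτ' : ∀ s, HasDerivAt (deriv τ) (deriv (deriv τ) s) s := fun s =>
    (hτ'C.differentiable (by simp) s).hasDerivAt
  have hkk' : ∀ s, k s * deriv k s = ⟪deriv (deriv ξ) s, deriv (deriv (deriv ξ)) s⟫ := by
    intro s
    have h1 := (hDk s).pow 2
    norm_num at h1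
    have h2 : HasDerivAt (fun r => k r ^ 2)
        (⟪deriv (deriv ξ) s, deriv (deriv (deriv ξ)) s⟫ +
          ⟪deriv (deriv (deriv ξ)) s, deriv (deriv ξ) s⟫) s := by
      have e : (fun r => k r ^ 2) = fun r => ⟪deriv (deriv ξ) r, deriv (deriv ξ) r⟫ :=
        funext fun r => by rw [hk r, real_inner_self_eq_norm_sq]
      rw [e]; exact (hD2 s).inner ℝ (hD2 s)
    have h3 := h1.unique h2
    nlinarith [h3, real_inner_comm (deriv (deriv ξ) s) (deriv (deriv (deriv ξ)) s)]
  have hτdet : ∀ s, τ s * k s ^ 2 =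
      det3 (deriv ξ s) (deriv (deriv ξ) s) (deriv (deriv (deriv ξ)) s) := fun s => by
    rw [hτ s]; exact div_mul_cancel₀ _ (pow_ne_zero 2 (hkne s))
  have hkB : ∀ s, k s • B s = cross3 (deriv ξ s) (deriv (deriv ξ) s) := fun s => by
    rw [hB s, hN s, cross3_smul_right, smul_smul, mul_inv_cancel₀ (hkne s), one_smul]
  have hpef : pe = fun s => ξ s + (k s / (deriv k s * τ s - k s * deriv τ s)) •
      (τ s • deriv ξ s + cross3 (deriv ξ s) (deriv (deriv ξ) s)) :=
    funext fun s => by rw [hpe s, hkB s]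
  intro t
  have hDW : HasDerivAt (fun s => deriv k s * τ s - k s * deriv τ s)
      ((deriv (deriv k) t * τ t + deriv k t * deriv τ t) -
        (deriv k t * deriv τ t + k t * deriv (deriv τ) t)) t :=
    ((hDk' t).mul (hDτ t)).sub ((hDk t).mul (hDτ' t))
  have hDf : HasDerivAt (fun s => k s / (deriv k s * τ s - k s * deriv τ s))
      ((deriv k t * (deriv k t * τ t - k t * deriv τ t) -
        k t * ((deriv (deriv k) t * τ t + deriv k t * deriv τ t) -
          (deriv k t * deriv τ t + k t * deriv (deriv τ) t))) /
        (deriv k t * τ t - k t * deriv τ t) ^ 2) t :=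
    (hDk t).div hDW (hW t)
  have hDD : HasDerivAt (fun s => τ s • deriv ξ s + cross3 (deriv ξ s) (deriv (deriv ξ) s))
      ((τ t • deriv (deriv ξ) t + deriv τ t • deriv ξ t) +
        (cross3 (deriv (deriv ξ) t) (deriv (deriv ξ) t) +
          cross3 (deriv ξ t) (deriv (deriv (deriv ξ)) t))) t :=
    ((hDτ t).smul (hD1 t)).add (hasDerivAt_cross3 (hD1 t) (hD2 t))
  have hderiv_pe : deriv pe t = deriv ξ t +
      ((k t / (deriv k t * τ t - k t * deriv τ t)) •
        ((τ t • deriv (deriv ξ) t + deriv τ t • deriv ξ t) +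
          (cross3 (deriv (deriv ξ) t) (deriv (deriv ξ) t) +
            cross3 (deriv ξ t) (deriv (deriv (deriv ξ)) t))) +
        ((deriv k t * (deriv k t * τ t - k t * deriv τ t) -
          k t * ((deriv (deriv k) t * τ t + deriv k t * deriv τ t) -
            (deriv k t * deriv τ t + k t * deriv (deriv τ) t))) /
          (deriv k t * τ t - k t * deriv τ t) ^ 2) •
          (τ t • deriv ξ t + cross3 (deriv ξ t) (deriv (deriv ξ) t))) := by
    rw [hpef]
    exact ((hD0 t).add (hDf.smul hDD)).deriv
  have hkey := cross_key (deriv ξ t) (deriv (deriv ξ) t) (deriv (deriv (deriv ξ)) t)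
    (huu t) (huv t)
  have hvv : ⟪deriv (deriv ξ) t, deriv (deriv ξ) t⟫ = k t ^ 2 := by
    rw [real_inner_self_eq_norm_sq, hk t]
  rw [hvv, ← hkk' t, ← hτdet t] at hkey
  have hcuw : cross3 (deriv ξ t) (deriv (deriv (deriv ξ)) t)
      = (deriv k t / k t) • cross3 (deriv ξ t) (deriv (deriv ξ) t)
        - τ t • deriv (deriv ξ) t := by
    refine smul_right_injective _ (pow_ne_zero 2 (hkne t)) ?_
    show k t ^ 2 • cross3 (deriv ξ t) (deriv (deriv (deriv ξ)) t) =
      k t ^ 2 • ((deriv k t / k t) • cross3 (deriv ξ t) (deriv (deriv ξ) t)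
        - τ t • deriv (deriv ξ) t)
    rw [hkey]
    match_scalars <;> field_simp [hkne t] <;> ring
  have hg1 : deriv (fun s => τ s / k s) = fun s =>
      (deriv τ s * k s - τ s * deriv k s) / k s ^ 2 :=
    funext fun s => ((hDτ s).div (hDk s) (hkne s)).deriv
  have hGaux := ((((hDτ' t).mul (hDk t)).sub ((hDτ t).mul (hDk' t))).div ((hDk t).pow 2)
      (pow_ne_zero 2 (hkne t))).deriv
  have hG : deriv (deriv (fun s => τ s / k s)) t =
      ((deriv (deriv τ) t * k t + deriv τ t * deriv k t -
        (deriv τ t * deriv k t + τ t * deriv (deriv k) t)) * k t ^ 2 -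
        (deriv τ t * k t - τ t * deriv k t) * (2 * k t * deriv k t)) / (k t ^ 2) ^ 2 := by
    rw [hg1, show (fun s => (deriv τ s * k s - τ s * deriv k s) / k s ^ 2) =
      (deriv τ * k - τ * deriv k) / k ^ 2 from rfl, hGaux]
    simp only [Pi.pow_apply, Pi.sub_apply, Pi.mul_apply, Nat.reduceSub]
    push_cast
    ring
  have main : deriv pe t =
      (k t ^ 3 * deriv (deriv (fun s => τ s / k s)) t /
        (deriv k t * τ t - k t * deriv τ t) ^ 2) • (τ t • deriv ξ t + k t • B t) := by
    rw [hkB t, hderiv_pe, hG, cross3_self, zero_add, hcuw]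
    match_scalars <;> field_simp [hkne t, hW t] <;> ring
  refine ⟨main, ?_⟩
  rw [main]
  have hDne : τ t • deriv ξ t + k t • B t ≠ 0 := by
    intro h
    have h0 : ⟪τ t • deriv ξ t + k t • B t, deriv ξ t⟫ = 0 := by rw [h]; simp
    rw [hkB t, inner_add_left, real_inner_smul_left, huu t,
      inner_cross3_left] at h0
    simp at h0
    exact hτne t h0
  constructor
  · intro h
    rcases smul_eq_zero.mp h with h1 | h2
    · rcases div_eq_zero_iff.mp h1 with h3 | h3
      · rcases mul_eq_zero.mp h3 with h4 | h4
        · exact absurd h4 (pow_ne_zero 3 (hkne t))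
        · exact h4
      · exact absurd h3 (pow_ne_zero 2 (hW t))
    · exact absurd h2 hDne
  · intro h
    rw [h]
    simp
end
end

section
/- Let α : ℝ → ℝ be a smooth function with α' = τ and cos α(t) ≠ 0 for all t, and define η = ξ + r·n − r·tan(α)·b. Then for every t the vector η'(t) is parallel to η(t) − ξ(t); that is, the tangent lines of the Monge evolute η pass through the corresponding points of ξ, so η is a Monge evolute of ξ (and ξ is obtained from η by the taut-string construction). -/
open scoped RealInnerProductSpace ContDiff

noncomputable section

def dot3 (u v : EuclideanSpace ℝ (Fin 3)) : ℝ := u 0 * v 0 + u 1 * v 1 + u 2 * v 2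

lemma cross3_zero (u v : EuclideanSpace ℝ (Fin 3)) : cross3 u v 0 = u 1 * v 2 - u 2 * v 1 := rfl
lemma cross3_one (u v : EuclideanSpace ℝ (Fin 3)) : cross3 u v 1 = u 2 * v 0 - u 0 * v 2 := rfl
lemma cross3_two (u v : EuclideanSpace ℝ (Fin 3)) : cross3 u v 2 = u 0 * v 1 - u 1 * v 0 := rfl

lemma norm_sq_dot3 (u : EuclideanSpace ℝ (Fin 3)) : ‖u‖ ^ 2 = dot3 u u := by
  rw [← real_inner_self_eq_norm_sq]
  rw [PiLp.inner_apply]; simp [Fin.sum_univ_three, dot3]; ring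

lemma cramer3 (u v w x : EuclideanSpace ℝ (Fin 3)) (i : Fin 3) :
    det3 x v w * u i + det3 u x w * v i + det3 u v x * w i = det3 u v w * x i := by
  fin_cases i <;> simp only [det3, Fin.zero_eta, Fin.mk_one, Fin.reduceFinMk] <;> ring

lemma det3_cross_self (u v : EuclideanSpace ℝ (Fin 3)) :
    det3 u v (cross3 u v) = dot3 u u * dot3 v v - dot3 u v ^ 2 := by
  simp only [det3, dot3, cross3_zero, cross3_one, cross3_two]; ring

lemma det3_fst_cross (u v x : EuclideanSpace ℝ (Fin 3)) :
    det3 x v (cross3 u v) = dot3 u x * dot3 v v - dot3 v x * dot3 u v := by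
  simp only [det3, dot3, cross3_zero, cross3_one, cross3_two]; ring

lemma det3_snd_cross (u v x : EuclideanSpace ℝ (Fin 3)) :
    det3 u x (cross3 u v) = dot3 u u * dot3 v x - dot3 u v * dot3 u x := by
  simp only [det3, dot3, cross3_zero, cross3_one, cross3_two]; ring

lemma hasDerivAt_euclidean (f : ℝ → EuclideanSpace ℝ (Fin 3)) (v : EuclideanSpace ℝ (Fin 3)) (t : ℝ) :
    HasDerivAt f v t ↔ ∀ i, HasDerivAt (fun s => f s i) (v i) t := by
  constructor
  · intro h i
    exact (EuclideanSpace.proj (𝕜 := ℝ) i).hasFDerivAt.comp_hasDerivAt t h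
  · intro h
    have h2 : HasDerivAt (fun s => (EuclideanSpace.equiv (Fin 3) ℝ) (f s))
        ((EuclideanSpace.equiv (Fin 3) ℝ) v) t := hasDerivAt_pi.mpr h
    have := ((EuclideanSpace.equiv (Fin 3) ℝ).symm : (Fin 3 → ℝ) →L[ℝ] EuclideanSpace ℝ (Fin 3)).hasFDerivAt.comp_hasDerivAt t h2
    simpa [Function.comp_def] using this

lemma dot3_hasDerivAt {f g : ℝ → EuclideanSpace ℝ (Fin 3)} {f' g' : EuclideanSpace ℝ (Fin 3)} {t : ℝ}
    (hf : HasDerivAt f f' t) (hg : HasDerivAt g g' t) :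
    HasDerivAt (fun s => dot3 (f s) (g s)) (dot3 f' (g t) + dot3 (f t) g') t := by
  have hfc := (hasDerivAt_euclidean f f' t).mp hf
  have hgc := (hasDerivAt_euclidean g g' t).mp hg
  have : HasDerivAt (fun s => f s 0 * g s 0 + f s 1 * g s 1 + f s 2 * g s 2)
      ((f' 0 * g t 0 + f t 0 * g' 0) + (f' 1 * g t 1 + f t 1 * g' 1)
        + (f' 2 * g t 2 + f t 2 * g' 2)) t :=
    (((hfc 0).mul (hgc 0)).add ((hfc 1).mul (hgc 1))).add ((hfc 2).mul (hgc 2))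
  simpa only [dot3] using this.congr_deriv (by ring)

theorem stmt_14
    (ξ : ℝ → EuclideanSpace ℝ (Fin 3))
    (hξ : ContDiff ℝ (⊤ : ℕ∞) ξ)
    (hunit : ∀ t, ‖deriv ξ t‖ = 1)
    (k τ r : ℝ → ℝ) (N B : ℝ → EuclideanSpace ℝ (Fin 3))
    (hk : ∀ t, k t = ‖deriv (deriv ξ) t‖)
    (hkpos : ∀ t, 0 < k t)
    (hN : ∀ t, N t = (k t)⁻¹ • deriv (deriv ξ) t)
    (hB : ∀ t, B t = cross3 (deriv ξ t) (N t))
    (hτ : ∀ t, τ t = det3 (deriv ξ t) (deriv (deriv ξ) t) (deriv (deriv (deriv ξ)) t) / (k t) ^ 2)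
    (hτne : ∀ t, τ t ≠ 0)
    (hr : ∀ t, r t = (k t)⁻¹)
    (α : ℝ → ℝ) (hα : ContDiff ℝ (⊤ : ℕ∞) α)
    (hα' : ∀ t, deriv α t = τ t)
    (hcos : ∀ t, Real.cos (α t) ≠ 0)
    (η : ℝ → EuclideanSpace ℝ (Fin 3))
    (hη : ∀ t, η t = ξ t + r t • N t - (r t * Real.tan (α t)) • B t)
 :
    ∀ t, ∃ c : ℝ, deriv η t = c • (η t - ξ t) := by
  intro t
  -- smoothness of derivatives
  have hξ0 : ContDiff ℝ ∞ ξ := hξ.of_le (by simp)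
  have hξ1 : ContDiff ℝ ∞ (deriv ξ) := (contDiff_infty_iff_deriv.mp hξ0).2
  have hξ2 : ContDiff ℝ ∞ (deriv (deriv ξ)) := (contDiff_infty_iff_deriv.mp hξ1).2
  have hd1 : ∀ s, HasDerivAt (deriv ξ) (deriv (deriv ξ) s) s :=
    fun s => ((contDiff_infty_iff_deriv.mp hξ1).1 s).hasDerivAt
  have hd2 : ∀ s, HasDerivAt (deriv (deriv ξ)) (deriv (deriv (deriv ξ)) s) s :=
    fun s => ((contDiff_infty_iff_deriv.mp hξ2).1 s).hasDerivAt
  have hkne : ∀ s, k s ≠ 0 := fun s => (hkpos s).ne'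
  -- basic dot identities
  have hTT : ∀ s, dot3 (deriv ξ s) (deriv ξ s) = 1 := fun s => by
    rw [← norm_sq_dot3, hunit]; norm_num
  have hD2N : ∀ s, deriv (deriv ξ) s = k s • N s := fun s => by
    rw [hN, smul_inv_smul₀ (hkne s)]
  have hD2D2 : ∀ s, dot3 (deriv (deriv ξ) s) (deriv (deriv ξ) s) = k s ^ 2 := fun s => by
    rw [← norm_sq_dot3, hk]
  have hNN : ∀ s, dot3 (N s) (N s) = 1 := fun s => by
    have := hD2D2 s
    rw [hD2N s] at this
    simp only [dot3, PiLp.smul_apply, smul_eq_mul] at this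
    have h2 : k s ^ 2 * dot3 (N s) (N s) = k s ^ 2 * 1 := by
      simp only [dot3]; rw [mul_one]; linarith [this]
    exact mul_left_cancel₀ (pow_ne_zero 2 (hkne s)) h2
  -- dot T D2 = 0 from differentiating ‖T‖² = 1
  have hTD2 : ∀ s, dot3 (deriv ξ s) (deriv (deriv ξ) s) = 0 := by
    intro s
    have hconst : HasDerivAt (fun u => dot3 (deriv ξ u) (deriv ξ u)) 0 s := by
      have : (fun u => dot3 (deriv ξ u) (deriv ξ u)) = fun _ => (1:ℝ) := funext hTT
      rw [this]; exact hasDerivAt_const s 1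
    have hprod := dot3_hasDerivAt (hd1 s) (hd1 s)
    have := hprod.unique hconst
    simp only [dot3] at this ⊢
    linarith
  have hTN : ∀ s, dot3 (deriv ξ s) (N s) = 0 := by
    intro s
    have := hTD2 s
    rw [hD2N s] at this
    simp only [dot3, PiLp.smul_apply, smul_eq_mul] at this
    simp only [dot3]
    have h2 : k s * (deriv ξ s 0 * N s 0 + deriv ξ s 1 * N s 1 + deriv ξ s 2 * N s 2) = 0 := by
      linear_combination this
    rcases mul_eq_zero.mp h2 with h | h
    · exact absurd h (hkne s)
    · exact h
  -- differentiability of k at t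
  have hqd := dot3_hasDerivAt (hd2 t) (hd2 t)
  have hkfun : k = fun s => Real.sqrt (dot3 (deriv (deriv ξ) s) (deriv (deriv ξ) s)) := by
    funext s
    rw [hk, ← norm_sq_dot3, Real.sqrt_sq (norm_nonneg _)]
  have hqne : dot3 (deriv (deriv ξ) t) (deriv (deriv ξ) t) ≠ 0 := by
    rw [hD2D2]; exact pow_ne_zero 2 (hkne t)
  obtain ⟨dk, hdk⟩ : ∃ d, HasDerivAt k d t := ⟨_, hkfun.symm ▸ (hqd.sqrt hqne)⟩
  -- r
  have hrfun : r = fun s => (k s)⁻¹ := funext hr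
  obtain ⟨dr, hdr⟩ : ∃ d, HasDerivAt r d t := ⟨_, by rw [hrfun]; exact hdk.inv (hkne t)⟩
  -- N and its derivative
  have hNfun : N = fun s => r s • deriv (deriv ξ) s := by
    funext s; rw [hN, hr]
  have hdN : HasDerivAt N (r t • deriv (deriv (deriv ξ)) t + dr • deriv (deriv ξ) t) t := by
    rw [hNfun]; exact hdr.smul (hd2 t)
  set N' : EuclideanSpace ℝ (Fin 3) := r t • deriv (deriv (deriv ξ)) t + dr • deriv (deriv ξ) t with hN'def
  -- dot derivative identities at t
  have hNN' : dot3 (N t) N' = 0 := by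
    have hconst : HasDerivAt (fun u => dot3 (N u) (N u)) 0 t := by
      have : (fun u => dot3 (N u) (N u)) = fun _ => (1:ℝ) := funext hNN
      rw [this]; exact hasDerivAt_const t 1
    have := (dot3_hasDerivAt hdN hdN).unique hconst
    simp only [dot3] at this ⊢
    linarith
  have hTN' : dot3 (deriv ξ t) N' = -(k t) := by
    have hconst : HasDerivAt (fun u => dot3 (deriv ξ u) (N u)) 0 t := by
      have : (fun u => dot3 (deriv ξ u) (N u)) = fun _ => (0:ℝ) := funext hTN
      rw [this]; exact hasDerivAt_const t 0
    have h2 := (dot3_hasDerivAt (hd1 t) hdN).unique hconst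
    have h3 : dot3 (deriv (deriv ξ) t) (N t) = k t := by
      rw [hD2N t]
      simp only [dot3, PiLp.smul_apply, smul_eq_mul]
      have := hNN t
      simp only [dot3] at this
      linear_combination (k t) * this
    rw [h3] at h2
    linarith
  -- τ t = det3 T N N'
  have hkr : k t * r t = 1 := by rw [hr]; exact mul_inv_cancel₀ (hkne t)
  have hD3 : deriv (deriv (deriv ξ)) t = k t • N' - (dr * k t) • deriv (deriv ξ) t := by
    rw [hN'def, smul_add, smul_smul, smul_smul, hkr, one_smul]
    module
  have hτt : τ t = det3 (deriv ξ t) (N t) N' := by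
    have hdet2 : det3 (deriv ξ t) (deriv (deriv ξ) t) (deriv (deriv (deriv ξ)) t)
        = k t ^ 2 * det3 (deriv ξ t) (N t) N' := by
      rw [hD3, hD2N t]
      simp only [det3, PiLp.smul_apply, PiLp.sub_apply, smul_eq_mul]
      ring
    rw [hτ, hdet2]
    exact mul_div_cancel_left₀ _ (pow_ne_zero 2 (hkne t))
  -- B and det3 T N B = 1
  have hBB1 : det3 (deriv ξ t) (N t) (B t) = 1 := by
    rw [hB, det3_cross_self, hTT, hNN, hTN]
    norm_num
  -- coefficients of N' in basis
  have haN' : det3 N' (N t) (B t) = -(k t) := by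
    rw [hB, det3_fst_cross, hNN, hTN, hTN']
    ring
  have hbN' : det3 (deriv ξ t) N' (B t) = 0 := by
    rw [hB, det3_snd_cross, hTT, hTN, hNN']
    ring
  have hcN' : det3 (deriv ξ t) (N t) N' = τ t := hτt.symm
  have hN'exp : ∀ i, N' i = -(k t) * deriv ξ t i + τ t * B t i := by
    intro i
    have := cramer3 (deriv ξ t) (N t) (B t) N' i
    rw [hBB1, haN', hbN', hcN'] at this
    linarith
  -- derivative of B
  have hNc := (hasDerivAt_euclidean N N' t).mp hdN
  have hd1c := (hasDerivAt_euclidean (deriv ξ) (deriv (deriv ξ) t) t).mp (hd1 t)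
  set B' : EuclideanSpace ℝ (Fin 3) :=
    cross3 (deriv (deriv ξ) t) (N t) + cross3 (deriv ξ t) N' with hB'def
  have hBfun : B = fun s => cross3 (deriv ξ s) (N s) := funext hB
  have hdB : HasDerivAt B B' t := by
    rw [hBfun]
    rw [hasDerivAt_euclidean]
    intro i
    fin_cases i
    · have h := ((hd1c 1).mul (hNc 2)).sub ((hd1c 2).mul (hNc 1))
      have he : HasDerivAt (fun s => cross3 (deriv ξ s) (N s) 0) _ t := h
      exact he.congr_deriv (by
        show _ = B' 0
        rw [hB'def]
        simp only [PiLp.add_apply, cross3_zero]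
        ring)
    · have h := ((hd1c 2).mul (hNc 0)).sub ((hd1c 0).mul (hNc 2))
      have he : HasDerivAt (fun s => cross3 (deriv ξ s) (N s) 1) _ t := h
      exact he.congr_deriv (by
        show _ = B' 1
        rw [hB'def]
        simp only [PiLp.add_apply, cross3_one]
        ring)
    · have h := ((hd1c 0).mul (hNc 1)).sub ((hd1c 1).mul (hNc 0))
      have he : HasDerivAt (fun s => cross3 (deriv ξ s) (N s) 2) _ t := h
      exact he.congr_deriv (by
        show _ = B' 2
        rw [hB'def]
        simp only [PiLp.add_apply, cross3_two]
        ring)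
  -- B' = -τ • N
  have hTTc : deriv ξ t 0 * deriv ξ t 0 + deriv ξ t 1 * deriv ξ t 1
      + deriv ξ t 2 * deriv ξ t 2 = 1 := hTT t
  have hTNc : deriv ξ t 0 * N t 0 + deriv ξ t 1 * N t 1 + deriv ξ t 2 * N t 2 = 0 := hTN t
  have hB'exp : ∀ i, B' i = -(τ t) * N t i := by
    intro i
    rw [hB'def]
    have hD2c : ∀ j, deriv (deriv ξ) t j = k t * N t j := fun j => by
      rw [hD2N t]; simp [PiLp.smul_apply]
    have hBc : ∀ j : Fin 3, B t j = cross3 (deriv ξ t) (N t) j := fun j => by rw [hB]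
    fin_cases i
    · simp only [Fin.zero_eta, Fin.mk_one, Fin.reduceFinMk, PiLp.add_apply, cross3_zero, hD2c, hN'exp, hBc, cross3_one, cross3_two]
      linear_combination (τ t * deriv ξ t 0) * hTNc - (τ t * N t 0) * hTTc
    · simp only [Fin.zero_eta, Fin.mk_one, Fin.reduceFinMk, PiLp.add_apply, cross3_one, hD2c, hN'exp, hBc, cross3_zero, cross3_two]
      linear_combination (τ t * deriv ξ t 1) * hTNc - (τ t * N t 1) * hTTc
    · simp only [Fin.zero_eta, Fin.mk_one, Fin.reduceFinMk, PiLp.add_apply, cross3_two, hD2c, hN'exp, hBc, cross3_zero, cross3_one]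
      linear_combination (τ t * deriv ξ t 2) * hTNc - (τ t * N t 2) * hTTc
  -- derivative of α and tan ∘ α
  have hαt : HasDerivAt α (τ t) t := by
    rw [← hα']
    have hα0 : ContDiff ℝ ∞ α := hα.of_le (by simp)
    exact ((contDiff_infty_iff_deriv.mp hα0).1 t).hasDerivAt
  have htan : HasDerivAt (fun s => Real.tan (α s)) (1 / Real.cos (α t) ^ 2 * τ t) t :=
    (Real.hasDerivAt_tan (hcos t)).comp t hαt
  -- derivative of η
  have hηfun : η = fun s => ξ s + r s • N s - (r s * Real.tan (α s)) • B s := funext hη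
  have hdη : HasDerivAt η
      ((deriv ξ t + (r t • N' + dr • N t))
        - ((r t * Real.tan (α t)) • B' + (dr * Real.tan (α t)
            + r t * (1 / Real.cos (α t) ^ 2 * τ t)) • B t)) t := by
    rw [hηfun]
    exact ((((contDiff_infty_iff_deriv.mp hξ0).1 t).hasDerivAt.add (hdr.smul hdN)).sub
      ((hdr.mul htan).smul hdB))
  rw [hdη.deriv]
  refine ⟨k t * (dr + r t * τ t * Real.tan (α t)), ?_⟩
  have hηξ : η t - ξ t = r t • N t - (r t * Real.tan (α t)) • B t := by
    rw [hη]; abel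
  rw [hηξ]
  have htan2 : Real.tan (α t) ^ 2 + 1 = 1 / Real.cos (α t) ^ 2 := by
    have h := Real.inv_one_add_tan_sq (hcos t)
    rw [← h, one_div, inv_inv, add_comm]
  ext i
  simp only [PiLp.add_apply, PiLp.sub_apply, PiLp.smul_apply, smul_eq_mul]
  rw [hN'exp i, hB'exp i]
  linear_combination (- (deriv ξ t i)) * hkr
    + (r t * τ t * B t i) * htan2
    + (dr * Real.tan (α t) * B t i - dr * N t i
        + r t * τ t * Real.tan (α t) ^ 2 * B t i
        - r t * τ t * Real.tan (α t) * N t i) * hkr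
end
end
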